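/- Pauli twirl: for any quantum channel Λ on n qubits with Kraus decomposition, the twirled channel Λ'(ρ) = (1/4ⁿ)Σ_P P† Λ(P ρ P†) P, averaged over all n-qubit Pauli operators P, is a Pauli channel: Λ'(ρ) = Σ_Q q_Q Q ρ Q† for some probability distribution {q_Q} over Pauli operators Q. -/
import Mathlib

open Matrix

noncomputable section

/-- The four single-qubit Pauli matrices I, X, Y, Z. -/
def pauli4 : Fin 4 → Matrix (Fin 2) (Fin 2) ℂ
  | 0 => 1
  | 1 => !![0, 1; 1, 0]
  | 2 => !![0, -Complex.I; Complex.I, 0]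
  | 3 => !![1, 0; 0, -1]

/-- The `n`-qubit Pauli string `P₁ ⊗ ⋯ ⊗ Pₙ`. -/
def pauliString {n : ℕ} (j : Fin n → Fin 4) :
    Matrix (Fin n → Fin 2) (Fin n → Fin 2) ℂ :=
  fun x y => ∏ k, pauli4 (j k) (x k) (y k)

/-! ### Auxiliary material -/

def omZ : Fin 4 → Fin 4 → ℤ := fun p q => if p = 0 ∨ q = 0 ∨ p = q then 1 else -1

def om : Fin 4 → Fin 4 → ℂ := fun p q => ((omZ p q : ℤ) : ℂ)

lemma pauli4_herm (p : Fin 4) : (pauli4 p)ᴴ = pauli4 p := by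
  fin_cases p <;> ext i j <;> fin_cases i <;> fin_cases j <;>
    simp [pauli4, Matrix.conjTranspose_apply, Matrix.one_apply]

lemma pauli4_conj (p q : Fin 4) : pauli4 p * pauli4 q * pauli4 p = om p q • pauli4 q := by
  fin_cases p <;> fin_cases q <;> ext i j <;> fin_cases i <;> fin_cases j <;>
    simp [pauli4, om, omZ, Matrix.mul_apply, Fin.sum_univ_succ, Matrix.one_apply] <;>
    ring_nf <;> simp [Complex.I_sq]

lemma pauli4_entry_orth (a b x y : Fin 2) :
    ∑ q : Fin 4, pauli4 q a b * pauli4 q x y = if a = y ∧ b = x then 2 else 0 := by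
  fin_cases a <;> fin_cases b <;> fin_cases x <;> fin_cases y <;>
    simp [pauli4, Fin.sum_univ_four, Matrix.one_apply] <;> ring_nf <;>
    simp [Complex.I_sq] <;> ring

lemma om_orth (q q' : Fin 4) : ∑ p : Fin 4, om p q * om p q' = if q = q' then 4 else 0 := by
  have h : ∑ p : Fin 4, omZ p q * omZ p q' = if q = q' then 4 else 0 := by revert q q'; decide
  have := congrArg (fun z : ℤ => (z : ℂ)) h
  push_cast at this
  simpa [om] using this

lemma trace_pauli4_mul (q q' : Fin 4) :
    (pauli4 q * pauli4 q').trace = if q = q' then 2 else 0 := by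
  fin_cases q <;> fin_cases q' <;>
    simp [pauli4, Matrix.trace, Matrix.mul_apply, Fin.sum_univ_succ, Matrix.diag,
      Matrix.one_apply] <;> ring_nf <;> simp [Complex.I_sq] <;> ring

def tens {n : ℕ} (M : Fin n → Matrix (Fin 2) (Fin 2) ℂ) :
    Matrix (Fin n → Fin 2) (Fin n → Fin 2) ℂ :=
  of fun x y => ∏ k, M k (x k) (y k)

lemma pauliString_eq_tens {n : ℕ} (j : Fin n → Fin 4) :
    pauliString j = tens (fun k => pauli4 (j k)) := rfl

lemma tens_mul {n : ℕ} (M N : Fin n → Matrix (Fin 2) (Fin 2) ℂ) :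
    tens M * tens N = tens (fun k => M k * N k) := by
  ext x y
  simp only [tens, mul_apply, of_apply, Fintype.prod_sum]
  rw [Finset.sum_congr rfl]
  intro z _
  rw [← Finset.prod_mul_distrib]

lemma tens_conjT {n : ℕ} (M : Fin n → Matrix (Fin 2) (Fin 2) ℂ) :
    (tens M)ᴴ = tens (fun k => (M k)ᴴ) := by
  ext x y
  simp [tens, conjTranspose_apply, map_prod]

lemma tens_smul {n : ℕ} (c : Fin n → ℂ) (M : Fin n → Matrix (Fin 2) (Fin 2) ℂ) :
    tens (fun k => c k • M k) = (∏ k, c k) • tens M := by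
  ext x y
  simp [tens, Finset.prod_mul_distrib]

lemma trace_tens {n : ℕ} (M : Fin n → Matrix (Fin 2) (Fin 2) ℂ) :
    (tens M).trace = ∏ k, (M k).trace := by
  simp only [trace, diag, tens, of_apply, Matrix.trace]
  rw [Fintype.prod_sum]

lemma prod_ite_eq_pow {n : ℕ} {β : Fin n → Prop} [inst : ∀ k, Decidable (β k)] (v : ℂ) :
    (∏ k, if β k then v else 0) = if ∀ k, β k then v ^ n else 0 := by
  by_cases h : ∀ k, β k
  · simp [h, Finset.prod_const, Finset.card_univ]
  · rw [if_neg h]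
    push_neg at h
    obtain ⟨k, hk⟩ := h
    exact Finset.prod_eq_zero (Finset.mem_univ k) (by simp [hk])

lemma PS_herm {n : ℕ} (j : Fin n → Fin 4) : (pauliString j)ᴴ = pauliString j := by
  rw [pauliString_eq_tens, tens_conjT]
  simp only [pauli4_herm]

lemma PS_conj {n : ℕ} (P Q : Fin n → Fin 4) :
    pauliString P * pauliString Q * pauliString P
      = (∏ k, om (P k) (Q k)) • pauliString Q := by
  simp only [pauliString_eq_tens, tens_mul]
  have h : (fun k => pauli4 (P k) * pauli4 (Q k) * pauli4 (P k))
      = fun k => om (P k) (Q k) • pauli4 (Q k) := by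
    funext k; exact pauli4_conj _ _
  rw [h, tens_smul]

lemma Om_orth {n : ℕ} (Q Q' : Fin n → Fin 4) :
    ∑ P : Fin n → Fin 4, (∏ k, om (P k) (Q k)) * (∏ k, om (P k) (Q' k))
      = if Q = Q' then (4 : ℂ) ^ n else 0 := by
  have h1 : ∀ P : Fin n → Fin 4,
      (∏ k, om (P k) (Q k)) * (∏ k, om (P k) (Q' k))
        = ∏ k, om (P k) (Q k) * om (P k) (Q' k) :=
    fun P => (Finset.prod_mul_distrib).symm
  simp_rw [h1]
  rw [← Fintype.prod_sum (fun k p => om p (Q k) * om p (Q' k))]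
  simp_rw [om_orth]
  rw [prod_ite_eq_pow]
  simp [funext_iff]

lemma trace_PS_mul {n : ℕ} (Q Q' : Fin n → Fin 4) :
    (pauliString Q * pauliString Q').trace = if Q = Q' then (2 : ℂ) ^ n else 0 := by
  rw [pauliString_eq_tens, pauliString_eq_tens, tens_mul, trace_tens]
  simp_rw [trace_pauli4_mul]
  rw [prod_ite_eq_pow]
  simp [funext_iff]

lemma PS_entry_orth {n : ℕ} (a b x y : Fin n → Fin 2) :
    ∑ Q : Fin n → Fin 4, pauliString Q a b * pauliString Q x y
      = if a = y ∧ b = x then (2 : ℂ) ^ n else 0 := by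
  have h1 : ∀ Q : Fin n → Fin 4,
      pauliString Q a b * pauliString Q x y
        = ∏ k, pauli4 (Q k) (a k) (b k) * pauli4 (Q k) (x k) (y k) :=
    fun Q => (Finset.prod_mul_distrib).symm
  simp_rw [h1]
  rw [← Fintype.prod_sum (fun k q => pauli4 q (a k) (b k) * pauli4 q (x k) (y k))]
  simp_rw [pauli4_entry_orth]
  rw [prod_ite_eq_pow]
  congr 1
  simp [funext_iff, forall_and]

lemma PS_expand {n : ℕ} (M : Matrix (Fin n → Fin 2) (Fin n → Fin 2) ℂ) :
    M = ∑ Q : Fin n → Fin 4,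
      (((2 : ℂ) ^ n)⁻¹ * (pauliString Q * M).trace) • pauliString Q := by
  have h2 : ((2 : ℂ) ^ n) ≠ 0 := pow_ne_zero _ two_ne_zero
  ext x y
  simp only [Matrix.sum_apply, Matrix.smul_apply, smul_eq_mul, Matrix.trace, Matrix.diag,
    Matrix.mul_apply]
  have step : ∀ Q : Fin n → Fin 4,
      ((2 : ℂ) ^ n)⁻¹ * (∑ a, ∑ b, pauliString Q a b * M b a) * pauliString Q x y
        = ∑ a, ∑ b, ((2 : ℂ) ^ n)⁻¹ * M b a * (pauliString Q a b * pauliString Q x y) := by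
    intro Q
    rw [Finset.mul_sum, Finset.sum_mul]
    refine Finset.sum_congr rfl fun a _ => ?_
    rw [Finset.mul_sum, Finset.sum_mul]
    refine Finset.sum_congr rfl fun b _ => ?_
    ring
  simp_rw [step]
  rw [Finset.sum_comm]
  have step2 : ∀ a : Fin n → Fin 2,
      ∑ Q : Fin n → Fin 4, ∑ b, ((2 : ℂ) ^ n)⁻¹ * M b a * (pauliString Q a b * pauliString Q x y)
        = ∑ b, ((2 : ℂ) ^ n)⁻¹ * M b a * (if a = y ∧ b = x then (2 : ℂ) ^ n else 0) := by
    intro a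
    rw [Finset.sum_comm]
    refine Finset.sum_congr rfl fun b _ => ?_
    rw [← Finset.mul_sum, PS_entry_orth]
  simp_rw [step2]
  simp only [mul_ite, mul_zero, ite_and]
  rw [Finset.sum_eq_single_of_mem y (Finset.mem_univ y) (fun a _ ha => by simp [ha]),
    Finset.sum_eq_single_of_mem x (Finset.mem_univ x) (fun b _ hb => by simp [hb])]
  simp
  field_simp

/-- Pauli twirl -/
theorem pauli_twirl_is_pauli_channel {n : ℕ} {κ : Type*} [Fintype κ]
    (A : κ → Matrix (Fin n → Fin 2) (Fin n → Fin 2) ℂ)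
    (hTP : ∑ k, (A k)ᴴ * A k = 1) :
    ∃ q : (Fin n → Fin 4) → ℝ,
      (∀ Q, 0 ≤ q Q) ∧ (∑ Q, q Q = 1) ∧
      ∀ ρ : Matrix (Fin n → Fin 2) (Fin n → Fin 2) ℂ,
        ((4 : ℂ) ^ n)⁻¹ •
            ∑ P : Fin n → Fin 4,
              (pauliString P)ᴴ *
                (∑ k, A k * (pauliString P * ρ * (pauliString P)ᴴ) * (A k)ᴴ) *
              pauliString P
          = ∑ Q : Fin n → Fin 4, (q Q : ℂ) • (pauliString Q * ρ * (pauliString Q)ᴴ) := by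
  classical
  set c : (Fin n → Fin 4) → κ → ℂ :=
    fun Q k => ((2 : ℂ) ^ n)⁻¹ * (pauliString Q * A k).trace with hc
  have hA : ∀ k, A k = ∑ Q, c Q k • pauliString Q := fun k => PS_expand (A k)
  have h2 : ((2 : ℂ) ^ n) ≠ 0 := pow_ne_zero _ two_ne_zero
  have h4 : ((4 : ℂ) ^ n) ≠ 0 := pow_ne_zero _ (by norm_num)
  -- trace of each A kᴴ * A k
  have htrk : ∀ k, ((A k)ᴴ * A k).trace
      = (2 : ℂ) ^ n * ∑ Q, (Complex.normSq (c Q k) : ℂ) := by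
    intro k
    conv_lhs => rw [hA k]
    rw [conjTranspose_sum]
    simp only [conjTranspose_smul, PS_herm, Finset.sum_mul, Finset.mul_sum,
      smul_mul_assoc, mul_smul_comm, smul_smul, Finset.smul_sum, trace_sum, trace_smul,
      trace_PS_mul, smul_eq_mul, mul_ite, mul_zero, Finset.sum_ite_eq, Finset.sum_ite_eq',
      Finset.mem_univ, if_true]
    refine Finset.sum_congr rfl fun Q _ => ?_
    have hns : c Q k * star (c Q k) = (Complex.normSq (c Q k) : ℂ) := Complex.mul_conj _
    rw [hns]
    ring
  -- sum of q is 1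
  have hsum : ∑ Q, ∑ k, Complex.normSq (c Q k) = 1 := by
    have ht := congrArg Matrix.trace hTP
    rw [trace_sum, trace_one] at ht
    simp_rw [htrk] at ht
    rw [← Finset.mul_sum] at ht
    have hcard : (Fintype.card (Fin n → Fin 2) : ℂ) = (2 : ℂ) ^ n := by
      simp [Fintype.card_fun]
    rw [hcard] at ht
    have hC : (∑ k, ∑ Q, (Complex.normSq (c Q k) : ℂ)) = 1 :=
      mul_left_cancel₀ h2 (by rw [ht, mul_one])
    rw [Finset.sum_comm] at hC
    have := hC
    push_cast at this ⊢
    exact_mod_cast this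
  refine ⟨fun Q => ∑ k, Complex.normSq (c Q k),
    fun Q => Finset.sum_nonneg fun k _ => Complex.normSq_nonneg _, hsum, ?_⟩
  intro ρ
  simp only [PS_herm]
  -- pointwise key identity
  have key : ∀ (P : Fin n → Fin 4) (k : κ),
      pauliString P * (A k * (pauliString P * ρ * pauliString P) * (A k)ᴴ) * pauliString P
        = ∑ Q, ∑ Q', ((c Q k * (starRingEnd ℂ) (c Q' k)) *
            ((∏ j, om (P j) (Q j)) * (∏ j, om (P j) (Q' j)))) •
              (pauliString Q * ρ * pauliString Q') := by
    intro P k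
    conv_lhs => rw [hA k]
    rw [conjTranspose_sum]
    simp only [conjTranspose_smul, PS_herm]
    simp only [Finset.sum_mul, Finset.mul_sum, smul_mul_assoc, mul_smul_comm, smul_smul,
      Finset.smul_sum]
    conv_lhs => rw [Finset.sum_comm]
    refine Finset.sum_congr rfl fun Q _ => ?_
    refine Finset.sum_congr rfl fun Q' _ => ?_
    have hassoc : pauliString P * (pauliString Q * (pauliString P * ρ * pauliString P) *
          pauliString Q') * pauliString P
        = (pauliString P * pauliString Q * pauliString P) * ρ *
            (pauliString P * pauliString Q' * pauliString P) := by
      simp only [Matrix.mul_assoc]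
    rw [hassoc, PS_conj, PS_conj]
    simp only [smul_mul_assoc, mul_smul_comm, smul_smul]
    congr 1
    simp only [starRingEnd_apply]
    ring
  -- sum over P for fixed k
  have key2 : ∀ k, ∑ P : Fin n → Fin 4,
      pauliString P * (A k * (pauliString P * ρ * pauliString P) * (A k)ᴴ) * pauliString P
        = (4 : ℂ) ^ n • ∑ Q, (Complex.normSq (c Q k) : ℂ) •
            (pauliString Q * ρ * pauliString Q) := by
    intro k
    simp_rw [key _ k]
    rw [Finset.sum_comm]
    have step : ∀ Q : Fin n → Fin 4,
        (∑ P : Fin n → Fin 4, ∑ Q', ((c Q k * (starRingEnd ℂ) (c Q' k)) *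
            ((∏ j, om (P j) (Q j)) * (∏ j, om (P j) (Q' j)))) •
              (pauliString Q * ρ * pauliString Q'))
          = ((4 : ℂ) ^ n * (Complex.normSq (c Q k) : ℂ)) •
              (pauliString Q * ρ * pauliString Q) := by
      intro Q
      rw [Finset.sum_comm]
      have inner : ∀ Q' : Fin n → Fin 4,
          (∑ P : Fin n → Fin 4, ((c Q k * (starRingEnd ℂ) (c Q' k)) *
              ((∏ j, om (P j) (Q j)) * (∏ j, om (P j) (Q' j)))) •
                (pauliString Q * ρ * pauliString Q'))
            = ((c Q k * (starRingEnd ℂ) (c Q' k)) *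
                (if Q = Q' then (4 : ℂ) ^ n else 0)) •
                  (pauliString Q * ρ * pauliString Q') := by
        intro Q'
        rw [← Finset.sum_smul, ← Finset.mul_sum, Om_orth]
      simp_rw [inner]
      simp only [mul_ite, mul_zero, ite_smul, zero_smul]
      rw [Finset.sum_ite_eq Finset.univ Q]
      simp only [Finset.mem_univ, if_true]
      congr 1
      rw [Complex.mul_conj]
      ring
    simp_rw [step]
    rw [Finset.smul_sum]
    refine Finset.sum_congr rfl fun Q _ => ?_
    rw [smul_smul]
  simp only [Finset.mul_sum, Finset.sum_mul]
  rw [Finset.sum_comm]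
  simp_rw [key2]
  rw [← Finset.smul_sum, smul_smul, inv_mul_cancel₀ h4, one_smul, Finset.sum_comm]
  refine Finset.sum_congr rfl fun Q _ => ?_
  rw [← Finset.sum_smul]
  congr 1
  push_cast
  rfl
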